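/- arXiv:2208.00872 — 2 statements merged into one kernel-verified Lean document; each statement's English description precedes it below -/
import Mathlib

section
/- Suppose the treatment effect τ is in L²_P(X,T). The set of minimizers in L²_P(X,T) of the population loss L_c(h) = E[Y - m(X) - h(X,T) + E{h(X,T)|X}]², where m(X) = E(Y|X), is exactly S = {h : h(X,T) = τ(X,T) + s(X) almost surely, for some s ∈ L²_P(X)}, where τ(x,t) = E(Y | X=x, T=t) - E(Y | X=x, T=0). -/
/-!
With `N = E(Y|X,T)`, the residual `Y - N` is orthogonal to `L²_P(X,T)`, and the hypothesis on `τ`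
rewrites `N - m(X)` as `τ - E(τ|X)`. Hence
`L_c(g) = E(Y - N)² + E[(τ - E(τ|X)) - (g - E(g|X))]²`: the first term does not depend on `g`
and the second vanishes at `g = τ`, so the minimizers are exactly the `g` with
`g - E(g|X) = τ - E(τ|X)`, i.e. `g = τ + s` with `s = E(g|X) - E(τ|X)`.
-/

open MeasureTheory

namespace MeasureTheory

variable {Ω : Type*} {m m0 : MeasurableSpace Ω} {μ : Measure Ω}

theorem integral_sq_sub_eq_zero_iff {f g : Ω → ℝ} (hf : MemLp f 2 μ) (hg : MemLp g 2 μ) :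
    ∫ ω, (f ω - g ω) ^ 2 ∂μ = 0 ↔ f =ᵐ[μ] g := by
  have hint : Integrable (fun ω => (f ω - g ω) ^ 2) μ := (hf.sub hg).integrable_sq
  rw [integral_eq_zero_iff_of_nonneg (fun _ => sq_nonneg _) hint]
  simp only [Filter.EventuallyEq, Pi.zero_apply, sq_eq_zero_iff, sub_eq_zero]

theorem integral_mul_sub_condExp_eq_zero (hm : m ≤ m0) [IsFiniteMeasure μ] {Y D : Ω → ℝ}
    (hY : MemLp Y 2 μ) (hDm : StronglyMeasurable[m] D) (hD : MemLp D 2 μ) :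
    ∫ ω, D ω * (Y ω - (μ[Y|m]) ω) ∂μ = 0 := by
  have hDY : Integrable (D * Y) μ := hD.integrable_mul hY
  have pull_out : ∫ ω, (D * μ[Y|m]) ω ∂μ = ∫ ω, (D * Y) ω ∂μ := by
    rw [← integral_condExp hm (f := D * Y)]
    exact integral_congr_ae
      (condExp_mul_of_stronglyMeasurable_left hDm hDY (hY.integrable one_le_two)).symm
  simp_rw [mul_sub]
  exact (integral_sub hDY (hD.integrable_mul (hY.condExp one_le_two))).trans
    (sub_eq_zero.2 pull_out.symm)

theorem integral_sq_sub_condExp_add (hm : m ≤ m0) [IsFiniteMeasure μ] {Y D : Ω → ℝ}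
    (hY : MemLp Y 2 μ) (hDm : StronglyMeasurable[m] D) (hD : MemLp D 2 μ) :
    ∫ ω, (Y ω - (μ[Y|m]) ω + D ω) ^ 2 ∂μ
      = ∫ ω, (Y ω - (μ[Y|m]) ω) ^ 2 ∂μ + ∫ ω, D ω ^ 2 ∂μ := by
  have hU : MemLp (Y - μ[Y|m]) 2 μ := hY.sub (hY.condExp one_le_two)
  have hU2 : Integrable (fun ω => (Y ω - (μ[Y|m]) ω) ^ 2) μ := hU.integrable_sq
  have hDU : Integrable (fun ω => 2 * (D ω * (Y ω - (μ[Y|m]) ω))) μ :=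
    (hD.integrable_mul hU).const_mul 2
  calc ∫ ω, (Y ω - (μ[Y|m]) ω + D ω) ^ 2 ∂μ
      = ∫ ω, ((Y ω - (μ[Y|m]) ω) ^ 2 + 2 * (D ω * (Y ω - (μ[Y|m]) ω)) + D ω ^ 2) ∂μ := by
        congr 1 with ω; ring
    _ = ∫ ω, (Y ω - (μ[Y|m]) ω) ^ 2 ∂μ + ∫ ω, D ω ^ 2 ∂μ := by
        have hsum : Integrable (fun ω => (Y ω - (μ[Y|m]) ω) ^ 2
            + 2 * (D ω * (Y ω - (μ[Y|m]) ω))) μ := hU2.add hDU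
        rw [integral_add hsum hD.integrable_sq, integral_add hU2 hDU,
          integral_const_mul, integral_mul_sub_condExp_eq_zero hm hY hDm hD, mul_zero, add_zero]

theorem sub_condExp_ae_eq_sub_condExp_iff (hm : m ≤ m0) [IsFiniteMeasure μ] {p : ENNReal}
    (hp : 1 ≤ p) {f g : Ω → ℝ} (hf : MemLp f p μ) (hg : MemLp g p μ) :
    f - μ[f|m] =ᵐ[μ] g - μ[g|m] ↔
      ∃ s : Ω → ℝ, StronglyMeasurable[m] s ∧ MemLp s p μ ∧ f =ᵐ[μ] fun ω => g ω + s ω := by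
  constructor
  · intro hfg
    refine ⟨μ[f|m] - μ[g|m], stronglyMeasurable_condExp.sub stronglyMeasurable_condExp,
      (hf.condExp hp).sub (hg.condExp hp), ?_⟩
    filter_upwards [hfg] with ω hω
    simp only [Pi.sub_apply] at hω ⊢
    linarith
  · rintro ⟨s, hsm, hs, hfgs⟩
    have hcond : μ[f|m] =ᵐ[μ] μ[g|m] + s := by
      calc μ[f|m] =ᵐ[μ] μ[g + s|m] := condExp_congr_ae hfgs
        _ =ᵐ[μ] μ[g|m] + μ[s|m] := condExp_add (hg.integrable hp) (hs.integrable hp) m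
        _ = μ[g|m] + s := by rw [condExp_of_stronglyMeasurable hm hsm (hs.integrable hp)]
    filter_upwards [hfgs, hcond] with ω h₁ h₂
    simp only [Pi.sub_apply, Pi.add_apply] at h₁ h₂ ⊢
    rw [h₁, h₂]
    ring

end MeasureTheory

theorem integral_rLoss_eq_noise_add_excess {Ω : Type*} {m0 : MeasurableSpace Ω}
    {μ : Measure Ω} [IsFiniteMeasure μ] {mX mXT : MeasurableSpace Ω} (hXle : mX ≤ mXT)
    (hXTle : mXT ≤ m0) {Y τ g : Ω → ℝ} (hY : MemLp Y 2 μ) (hτmeas : StronglyMeasurable[mXT] τ)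
    (hτL2 : MemLp τ 2 μ)
    (hτ : (fun ω => τ ω - (μ[τ|mX]) ω) =ᵐ[μ] fun ω => (μ[Y|mXT]) ω - (μ[Y|mX]) ω)
    (hgm : StronglyMeasurable[mXT] g) (hg : MemLp g 2 μ) :
    ∫ ω, (Y ω - (μ[Y|mX]) ω - g ω + (μ[g|mX]) ω) ^ 2 ∂μ
      = ∫ ω, (Y ω - (μ[Y|mXT]) ω) ^ 2 ∂μ
        + ∫ ω, ((τ - μ[τ|mX]) ω - (g - μ[g|mX]) ω) ^ 2 ∂μ := by
  have hDm : StronglyMeasurable[mXT] ((τ - μ[τ|mX]) - (g - μ[g|mX])) :=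
    (hτmeas.sub (stronglyMeasurable_condExp.mono hXle)).sub
      (hgm.sub (stronglyMeasurable_condExp.mono hXle))
  have hD : MemLp ((τ - μ[τ|mX]) - (g - μ[g|mX])) 2 μ :=
    (hτL2.sub (hτL2.condExp one_le_two)).sub (hg.sub (hg.condExp one_le_two))
  calc ∫ ω, (Y ω - (μ[Y|mX]) ω - g ω + (μ[g|mX]) ω) ^ 2 ∂μ
      = ∫ ω, (Y ω - (μ[Y|mXT]) ω + ((τ - μ[τ|mX]) - (g - μ[g|mX])) ω) ^ 2 ∂μ := by
        refine integral_congr_ae ?_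
        filter_upwards [hτ] with ω hω
        simp only [Pi.sub_apply] at hω ⊢
        rw [hω]
        ring
    _ = _ := integral_sq_sub_condExp_add hXTle hY hDm hD

/-- **Solution set of the generalized (continuous-treatment) R-loss.**
With `mX = σ(X) ≤ mXT = σ(X,T)`, `m(X) = E(Y|X)`, and a treatment effect
`τ ∈ L²_P(X,T)` satisfying (via unconfoundedness and consistency)
`τ − E(τ|X) = E(Y|X,T) − E(Y|X)` a.s., a square-integrable function `h` of `(X,T)`
minimizes `L_c(h) = E[Y − m(X) − h(X,T) + E{h(X,T)|X}]²` over `L²_P(X,T)` if and only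
if `h = τ + s` a.s. for some `s ∈ L²_P(X)`. -/
theorem generalized_rloss_solution_set
    {Ω : Type*} {m0 : MeasurableSpace Ω} (μ : Measure Ω) [IsProbabilityMeasure μ]
    (mX mXT : MeasurableSpace Ω) (hXle : mX ≤ mXT) (hXTle : mXT ≤ m0)
    (Y : Ω → ℝ) (hY : MemLp Y 2 μ)
    (τ : Ω → ℝ) (hτmeas : StronglyMeasurable[mXT] τ) (hτL2 : MemLp τ 2 μ)
    (hτ : (fun ω => τ ω - (μ[τ|mX]) ω) =ᵐ[μ] fun ω => (μ[Y|mXT]) ω - (μ[Y|mX]) ω)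
    (Lc : (Ω → ℝ) → ℝ)
    (hLc : ∀ h : Ω → ℝ,
      Lc h = ∫ ω, (Y ω - (μ[Y|mX]) ω - h ω + (μ[h|mX]) ω) ^ 2 ∂μ) :
    ∀ h : Ω → ℝ, StronglyMeasurable[mXT] h → MemLp h 2 μ →
      ((∀ g : Ω → ℝ, StronglyMeasurable[mXT] g → MemLp g 2 μ → Lc h ≤ Lc g)
        ↔ ∃ s : Ω → ℝ, StronglyMeasurable[mX] s ∧ MemLp s 2 μ ∧
            h =ᵐ[μ] fun ω => τ ω + s ω) := by
  intro h hhm hh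
  set excess : (Ω → ℝ) → ℝ := fun g => ∫ ω, ((τ - μ[τ|mX]) ω - (g - μ[g|mX]) ω) ^ 2 ∂μ
  have hLc_eq : ∀ g, StronglyMeasurable[mXT] g → MemLp g 2 μ →
      Lc g = ∫ ω, (Y ω - (μ[Y|mXT]) ω) ^ 2 ∂μ + excess g := fun g hgm hg => by
    rw [hLc]
    exact integral_rLoss_eq_noise_add_excess hXle hXTle hY hτmeas hτL2 hτ hgm hg
  have excess_nonneg : ∀ g, 0 ≤ excess g := fun g => integral_nonneg fun _ => sq_nonneg _
  have excess_τ : excess τ = 0 := by simp [excess]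
  rw [← sub_condExp_ae_eq_sub_condExp_iff (hXle.trans hXTle) one_le_two hh hτL2,
    Filter.eventuallyEq_comm, ← integral_sq_sub_eq_zero_iff (hτL2.sub (hτL2.condExp one_le_two))
      (hh.sub (hh.condExp one_le_two))]
  constructor
  · intro hmin
    have hle := hmin τ hτmeas hτL2
    rw [hLc_eq h hhm hh, hLc_eq τ hτmeas hτL2, excess_τ] at hle
    exact le_antisymm (by linarith) (excess_nonneg h)
  · intro hexcess g hgm hg
    rw [hLc_eq h hhm hh, hLc_eq g hgm hg]
    linarith [excess_nonneg g]
end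

section
/- Let τ_ρ be the unique minimizer over L²_P(X,T) of F(h) = ‖Π(h) - τ̃‖²_{L²_P} + ρ‖h‖²_{L²_P}, where Π(h)(x,t) = h(x,t) - E{h(X,T)|X=x} and τ̃(x,t) = τ(x,t) - E{τ(X,T)|X=x}. Then ‖Π(τ_ρ) - τ̃‖²_{L²_P} ≤ ρ‖τ̃‖²_{L²_P} and ‖τ_ρ - τ̃‖²_{L²_P} ≤ 2‖τ̃‖_{L²_P}·‖Π(τ_ρ) - τ̃‖_{L²_P}; in particular ‖τ_ρ - τ̃‖_{L²_P} = O(ρ^{1/4}) and τ_ρ → τ̃ in L²_P as ρ → 0. -/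
/-!
The minimizer `t` of the Tikhonov loss satisfies `E[t|X] = 0`: replacing `t` by `Π t = t - E[t|X]`
leaves the fit term unchanged and, by Pythagoras `‖t‖² = ‖Π t‖² + ‖E[t|X]‖²`, does not increase the
penalty. Hence `t - τ̃ = Π t - τ̃`. Comparing the loss of `t` with that of `h = τ̃` (fit term `0`,
since `Π τ̃ = τ̃`) and of `h = 0` bounds this residual by `ρ ‖τ̃‖²` and by `‖τ̃‖²`; the stated
inequalities are then arithmetic on square roots.
-/

open MeasureTheory Filter

lemma le_two_mul_sqrt_mul_sqrt {a b : ℝ} (ha : 0 ≤ a) (hab : a ≤ b) :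
    a ≤ 2 * √b * √a := by
  have hsqrt : √a ≤ √b := Real.sqrt_le_sqrt hab
  nlinarith [Real.mul_self_sqrt ha, Real.sqrt_nonneg a]

lemma le_two_mul_sqrt_mul {a b ρ : ℝ} (ha : 0 ≤ a) (hρ : 0 ≤ ρ) (haρb : a ≤ ρ * b)
    (hab : a ≤ b) : a ≤ 2 * √ρ * b := by
  have hb : 0 ≤ b := ha.trans hab
  have hsqrt_ρb : √a ≤ √ρ * √b := Real.sqrt_mul hρ b ▸ Real.sqrt_le_sqrt haρb
  have hsqrt_b : √a ≤ √b := Real.sqrt_le_sqrt hab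
  nlinarith [Real.mul_self_sqrt ha, Real.mul_self_sqrt hb, Real.sqrt_nonneg a, Real.sqrt_nonneg ρ]

namespace MeasureTheory

section CondExpL2

variable {Ω : Type*} {m m0 : MeasurableSpace Ω} {μ : Measure Ω} [IsFiniteMeasure μ]

lemma condExp_sub_condExp_ae_eq_zero (hm : m ≤ m0) {f : Ω → ℝ} (hf : Integrable f μ) :
    μ[f - μ[f|m]|m] =ᵐ[μ] 0 := by
  filter_upwards [condExp_sub hf integrable_condExp m] with ω hω
  rw [hω, Pi.sub_apply,
    condExp_of_stronglyMeasurable hm stronglyMeasurable_condExp integrable_condExp, sub_self,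
    Pi.zero_apply]

lemma integral_condExp_mul_self (hm : m ≤ m0) {f : Ω → ℝ} (hf : MemLp f 2 μ) :
    ∫ ω, (μ[f|m]) ω * f ω ∂μ = ∫ ω, (μ[f|m]) ω ^ 2 ∂μ :=
  calc ∫ ω, (μ[f|m] * f) ω ∂μ
      = ∫ ω, (μ[μ[f|m] * f|m]) ω ∂μ := (integral_condExp hm).symm
    _ = ∫ ω, (μ[f|m] * μ[f|m]) ω ∂μ :=
        integral_congr_ae <| condExp_mul_of_stronglyMeasurable_left stronglyMeasurable_condExp
          ((hf.condExp one_le_two).integrable_mul hf) (hf.integrable one_le_two)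
    _ = ∫ ω, (μ[f|m]) ω ^ 2 ∂μ := by simp only [Pi.mul_apply, sq]

lemma integral_sq_sub_condExp (hm : m ≤ m0) {f : Ω → ℝ} (hf : MemLp f 2 μ) :
    ∫ ω, (f ω - (μ[f|m]) ω) ^ 2 ∂μ = ∫ ω, f ω ^ 2 ∂μ - ∫ ω, (μ[f|m]) ω ^ 2 ∂μ := by
  have hE := hf.condExp (m := m) one_le_two
  have hcross : Integrable (fun ω => 2 * ((μ[f|m]) ω * f ω)) μ :=
    (hE.integrable_mul hf).const_mul 2
  have hlin : Integrable (fun ω => f ω ^ 2 - 2 * ((μ[f|m]) ω * f ω)) μ :=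
    hf.integrable_sq.sub hcross
  calc ∫ ω, (f ω - (μ[f|m]) ω) ^ 2 ∂μ
      = ∫ ω, (f ω ^ 2 - 2 * ((μ[f|m]) ω * f ω) + (μ[f|m]) ω ^ 2) ∂μ := by
        congr 1; ext ω; ring
    _ = ∫ ω, f ω ^ 2 ∂μ - ∫ ω, (μ[f|m]) ω ^ 2 ∂μ := by
        rw [integral_add hlin hE.integrable_sq,
          integral_sub hf.integrable_sq hcross, integral_const_mul,
          integral_condExp_mul_self hm hf]
        ring

lemma condExp_ae_eq_zero_of_integral_sq_le (hm : m ≤ m0) {f : Ω → ℝ} (hf : MemLp f 2 μ)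
    (h : ∫ ω, f ω ^ 2 ∂μ ≤ ∫ ω, (f ω - (μ[f|m]) ω) ^ 2 ∂μ) : μ[f|m] =ᵐ[μ] 0 := by
  rw [integral_sq_sub_condExp hm hf] at h
  have hzero : ∫ ω, (μ[f|m]) ω ^ 2 ∂μ = 0 :=
    le_antisymm (by linarith) (integral_nonneg fun _ => sq_nonneg _)
  filter_upwards [(integral_eq_zero_iff_of_nonneg (fun _ => sq_nonneg _)
    (hf.condExp one_le_two).integrable_sq).mp hzero] with ω hω
  exact pow_eq_zero_iff two_ne_zero |>.mp hω

end CondExpL2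

section Tikhonov

variable {Ω : Type*} {m m0 : MeasurableSpace Ω} {μ : Measure Ω}

noncomputable def tikhonovLoss (μ : Measure Ω) (m : MeasurableSpace Ω) (g : Ω → ℝ) (ρ : ℝ)
    (h : Ω → ℝ) : ℝ :=
  ∫ ω, (h ω - (μ[h|m]) ω - g ω) ^ 2 ∂μ + ρ * ∫ ω, h ω ^ 2 ∂μ

def IsTikhonovMinimizer (μ : Measure Ω) (m : MeasurableSpace Ω) (g : Ω → ℝ) (ρ : ℝ)
    (t : Ω → ℝ) : Prop :=
  MemLp t 2 μ ∧ ∀ h, MemLp h 2 μ → tikhonovLoss μ m g ρ t ≤ tikhonovLoss μ m g ρ h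

variable {g t : Ω → ℝ} {ρ : ℝ}

lemma integral_sq_sub_condExp_sub_le_tikhonovLoss (hρ : 0 ≤ ρ) :
    ∫ ω, (t ω - (μ[t|m]) ω - g ω) ^ 2 ∂μ ≤ tikhonovLoss μ m g ρ t :=
  le_add_of_nonneg_right (mul_nonneg hρ (integral_nonneg fun _ => sq_nonneg _))

lemma tikhonovLoss_zero : tikhonovLoss μ m g ρ 0 = ∫ ω, g ω ^ 2 ∂μ := by
  simp [tikhonovLoss, condExp_zero]

lemma tikhonovLoss_self_of_condExp_ae_eq_zero (hg : μ[g|m] =ᵐ[μ] 0) :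
    tikhonovLoss μ m g ρ g = ρ * ∫ ω, g ω ^ 2 ∂μ := by
  rw [tikhonovLoss, add_eq_right]
  refine integral_eq_zero_of_ae ?_
  filter_upwards [hg] with ω hω
  simp [hω]

namespace IsTikhonovMinimizer

variable [IsFiniteMeasure μ]

lemma condExp_ae_eq_zero (hm : m ≤ m0) (hρ : 0 < ρ) (ht : IsTikhonovMinimizer μ m g ρ t) :
    μ[t|m] =ᵐ[μ] 0 := by
  obtain ⟨htL2, hmin⟩ := ht
  have hproj := hmin (t - μ[t|m]) (htL2.sub (htL2.condExp one_le_two))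
  have hfit : ∫ ω, ((t - μ[t|m]) ω - (μ[t - μ[t|m]|m]) ω - g ω) ^ 2 ∂μ
      = ∫ ω, (t ω - (μ[t|m]) ω - g ω) ^ 2 ∂μ := by
    refine integral_congr_ae ?_
    filter_upwards [condExp_sub_condExp_ae_eq_zero hm (htL2.integrable one_le_two)] with ω hω
    simp [hω]
  rw [tikhonovLoss, tikhonovLoss, hfit, add_le_add_iff_left] at hproj
  exact condExp_ae_eq_zero_of_integral_sq_le hm htL2 (le_of_mul_le_mul_left hproj hρ)

lemma integral_sq_sub_eq (hm : m ≤ m0) (hρ : 0 < ρ) (ht : IsTikhonovMinimizer μ m g ρ t) :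
    ∫ ω, (t ω - g ω) ^ 2 ∂μ = ∫ ω, (t ω - (μ[t|m]) ω - g ω) ^ 2 ∂μ := by
  refine integral_congr_ae ?_
  filter_upwards [ht.condExp_ae_eq_zero hm hρ] with ω hω
  simp [hω]

lemma approximation_bounds (hm : m ≤ m0) (hρ : 0 < ρ) (ht : IsTikhonovMinimizer μ m g ρ t)
    (hg : MemLp g 2 μ) (hgc : μ[g|m] =ᵐ[μ] 0) :
    (∫ ω, (t ω - (μ[t|m]) ω - g ω) ^ 2 ∂μ ≤ ρ * ∫ ω, g ω ^ 2 ∂μ)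
      ∧ (∫ ω, (t ω - g ω) ^ 2 ∂μ
          ≤ 2 * √(∫ ω, g ω ^ 2 ∂μ) * √(∫ ω, (t ω - (μ[t|m]) ω - g ω) ^ 2 ∂μ))
      ∧ (∫ ω, (t ω - g ω) ^ 2 ∂μ ≤ 2 * √ρ * ∫ ω, g ω ^ 2 ∂μ) := by
  have hfit_nonneg : 0 ≤ ∫ ω, (t ω - (μ[t|m]) ω - g ω) ^ 2 ∂μ :=
    integral_nonneg fun _ => sq_nonneg _
  have hfit_le_ρ : ∫ ω, (t ω - (μ[t|m]) ω - g ω) ^ 2 ∂μ ≤ ρ * ∫ ω, g ω ^ 2 ∂μ :=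
    calc _ ≤ tikhonovLoss μ m g ρ t := integral_sq_sub_condExp_sub_le_tikhonovLoss hρ.le
      _ ≤ tikhonovLoss μ m g ρ g := ht.2 g hg
      _ = ρ * ∫ ω, g ω ^ 2 ∂μ := tikhonovLoss_self_of_condExp_ae_eq_zero hgc
  have hfit_le : ∫ ω, (t ω - (μ[t|m]) ω - g ω) ^ 2 ∂μ ≤ ∫ ω, g ω ^ 2 ∂μ :=
    calc _ ≤ tikhonovLoss μ m g ρ t := integral_sq_sub_condExp_sub_le_tikhonovLoss hρ.le
      _ ≤ tikhonovLoss μ m g ρ 0 := ht.2 0 MemLp.zero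
      _ = ∫ ω, g ω ^ 2 ∂μ := tikhonovLoss_zero
  rw [ht.integral_sq_sub_eq hm hρ]
  exact ⟨hfit_le_ρ, le_two_mul_sqrt_mul_sqrt hfit_nonneg hfit_le,
    le_two_mul_sqrt_mul hfit_nonneg hρ.le hfit_le_ρ hfit_le⟩

end IsTikhonovMinimizer

end Tikhonov

end MeasureTheory

/-- **Tikhonov approximation bounds for the regularized R-loss minimizer.**
Let `τ̃ = τ − E{τ|X}` and, for each `ρ > 0`, let `τ_ρ` minimize
`F_ρ(h) = ‖Π h − τ̃‖²_{L²} + ρ ‖h‖²_{L²}` over `L²_P(X,T)`, where `Π h = h − E{h|X}`.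
Then `‖Π τ_ρ − τ̃‖² ≤ ρ ‖τ̃‖²` and `‖τ_ρ − τ̃‖² ≤ 2 ‖τ̃‖ ‖Π τ_ρ − τ̃‖`;
in particular `‖τ_ρ − τ̃‖² ≤ 2 √ρ ‖τ̃‖²` (so `‖τ_ρ − τ̃‖ = O(ρ^{1/4})`) and
`τ_ρ → τ̃` in `L²` as `ρ → 0⁺`. -/
theorem tikhonov_minimizer_approximates
    {Ω : Type*} {m0 : MeasurableSpace Ω} (μ : Measure Ω) [IsProbabilityMeasure μ]
    (mX : MeasurableSpace Ω) (hle : mX ≤ m0)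
    (τ : Ω → ℝ) (hτ : MemLp τ 2 μ)
    (ttau : Ω → ℝ) (httau : ttau = fun ω => τ ω - (μ[τ|mX]) ω)
    (tρ : ℝ → Ω → ℝ)
    (htρL2 : ∀ ρ : ℝ, 0 < ρ → MemLp (tρ ρ) 2 μ)
    (htρmin : ∀ ρ : ℝ, 0 < ρ → ∀ h : Ω → ℝ, MemLp h 2 μ →
      (∫ ω, (tρ ρ ω - (μ[tρ ρ|mX]) ω - ttau ω) ^ 2 ∂μ + ρ * ∫ ω, tρ ρ ω ^ 2 ∂μ)
        ≤ (∫ ω, (h ω - (μ[h|mX]) ω - ttau ω) ^ 2 ∂μ + ρ * ∫ ω, h ω ^ 2 ∂μ)) :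
    (∀ ρ : ℝ, 0 < ρ →
      (∫ ω, (tρ ρ ω - (μ[tρ ρ|mX]) ω - ttau ω) ^ 2 ∂μ ≤ ρ * ∫ ω, ttau ω ^ 2 ∂μ)
      ∧ (∫ ω, (tρ ρ ω - ttau ω) ^ 2 ∂μ
          ≤ 2 * Real.sqrt (∫ ω, ttau ω ^ 2 ∂μ)
              * Real.sqrt (∫ ω, (tρ ρ ω - (μ[tρ ρ|mX]) ω - ttau ω) ^ 2 ∂μ))
      ∧ (∫ ω, (tρ ρ ω - ttau ω) ^ 2 ∂μ
          ≤ 2 * Real.sqrt ρ * ∫ ω, ttau ω ^ 2 ∂μ))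
    ∧ Tendsto (fun ρ : ℝ => ∫ ω, (tρ ρ ω - ttau ω) ^ 2 ∂μ)
        (nhdsWithin 0 (Set.Ioi 0)) (nhds 0) := by
  have httau_L2 : MemLp ttau 2 μ := httau ▸ hτ.sub (hτ.condExp one_le_two)
  have httau_condExp : μ[ttau|mX] =ᵐ[μ] 0 :=
    httau ▸ condExp_sub_condExp_ae_eq_zero hle (hτ.integrable one_le_two)
  have bounds := fun ρ (hρ : 0 < ρ) => IsTikhonovMinimizer.approximation_bounds hle hρ
    ⟨htρL2 ρ hρ, htρmin ρ hρ⟩ httau_L2 httau_condExp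
  have hsqrt_bound : Tendsto (fun ρ : ℝ => 2 * √ρ * ∫ ω, ttau ω ^ 2 ∂μ)
      (nhdsWithin 0 (Set.Ioi 0)) (nhds 0) := by
    have hcont : Continuous fun ρ : ℝ => 2 * √ρ * ∫ ω, ttau ω ^ 2 ∂μ := by fun_prop
    simpa using (hcont.tendsto 0).mono_left nhdsWithin_le_nhds
  refine ⟨bounds, squeeze_zero' ?_ ?_ hsqrt_bound⟩
  · exact Eventually.of_forall fun _ => integral_nonneg fun _ => sq_nonneg _
  · filter_upwards [self_mem_nhdsWithin] with ρ hρ using (bounds ρ hρ).2.2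
end
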